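/- arXiv:2605.18707 — 2 statements merged into one kernel-verified Lean document; each statement's English description precedes it below -/
import Mathlib

section
/- Let k ≥ 1, let x : Fin k → ℕ, and suppose μ ∈ Fin k satisfies x μ ≥ 1 and x j < x μ for every j ≠ μ (μ is the unique color in relative majority). Let C be a configuration over Fin k × Fin k that satisfies the braket invariant with respect to x and is stable. Then the diagonal braket (μ,μ) occurs in C, and for every j ≠ μ the diagonal braket (j,j) does not occur in C. -/
/-- The weight of a braket `(i,j)`: `k` if `i = j`, otherwise the representative
in `{1,…,k−1}` of `(j − i) mod k`. -/
def weight (k : ℕ) (p : Fin k × Fin k) : ℕ :=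
  if p.1 = p.2 then k else (p.2.val + k - p.1.val) % k

/-- `C` satisfies the braket invariant with respect to `x`: for every color `i`,
the number of bras `i` and the number of kets `i` in `C` both equal `x i`. -/
def Invariant (k : ℕ) (x : Fin k → ℕ) (C : Multiset (Fin k × Fin k)) : Prop :=
  ∀ i : Fin k, (C.filter (fun p => p.1 = i)).card = x i ∧
    (C.filter (fun p => p.2 = i)).card = x i

/-- `C` is stable: no beneficial exchange step applies to it. -/
def Stable (k : ℕ) (C : Multiset (Fin k × Fin k)) : Prop :=
  ∀ i j i' j' : Fin k, {(i, j), (i', j')} ≤ C →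
    min (weight k (i, j)) (weight k (i', j')) ≤
      min (weight k (i, j')) (weight k (i', j))

lemma mod_sub' {k a b : ℕ} (hk : 0 < k) (ha : a < k) (hb : b < k) :
    (b + k - a) % k = if a ≤ b then b - a else b + k - a := by
  by_cases h : a ≤ b
  · rw [if_pos h, show b + k - a = (b - a) + k by omega, Nat.add_mod_right]
    exact Nat.mod_eq_of_lt (by omega)
  · rw [if_neg h]
    exact Nat.mod_eq_of_lt (by omega)

/-- distance from `μ` to `c` going forward around the cycle. -/
def dd (k : ℕ) (μ c : Fin k) : ℕ := (c.val + k - μ.val) % k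

lemma dd_spec {k : ℕ} (hk : 0 < k) (μ c : Fin k) :
    dd k μ c = if μ.val ≤ c.val then c.val - μ.val else c.val + k - μ.val :=
  mod_sub' hk μ.isLt c.isLt

lemma dd_lt {k : ℕ} (hk : 0 < k) (μ c : Fin k) : dd k μ c < k := Nat.mod_lt _ hk

lemma dd_mu {k : ℕ} (μ : Fin k) : dd k μ μ = 0 := by
  unfold dd
  rw [show μ.val + k - μ.val = k by omega]
  exact Nat.mod_self k

lemma dd_inj {k : ℕ} (hk : 0 < k) {μ c c' : Fin k} (h : dd k μ c = dd k μ c') : c = c' := by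
  have h1 := dd_spec hk μ c
  have h2 := dd_spec hk μ c'
  have hc := c.isLt
  have hc' := c'.isLt
  have hμ := μ.isLt
  apply Fin.ext
  rw [h1, h2] at h
  split_ifs at h <;> omega

lemma dd_pos {k : ℕ} (hk : 0 < k) {μ c : Fin k} (h : c ≠ μ) : 1 ≤ dd k μ c := by
  rcases Nat.eq_zero_or_pos (dd k μ c) with h0 | h0
  · exact absurd (dd_inj hk (h0.trans (dd_mu μ).symm)) h
  · exact h0

lemma weight_eq {k : ℕ} (hk : 0 < k) (μ : Fin k) {i j : Fin k} (hij : i ≠ j) :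
    weight k (i, j) =
      if dd k μ i < dd k μ j then dd k μ j - dd k μ i else dd k μ j + k - dd k μ i := by
  have hv : i.val ≠ j.val := fun h => hij (Fin.ext h)
  have h1 := dd_spec hk μ i
  have h2 := dd_spec hk μ j
  have hi := i.isLt
  have hj := j.isLt
  have hμ := μ.isLt
  show (if i = j then k else (j.val + k - i.val) % k) = _
  rw [if_neg hij, mod_sub' hk i.isLt j.isLt, h1, h2]
  split_ifs <;> omega

lemma weight_diag {k : ℕ} (i : Fin k) : weight k (i, i) = k := by simp [weight]

lemma pair_le' {α : Type*} [DecidableEq α] {a b : α} {C : Multiset α}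
    (hab : a ≠ b) (ha : a ∈ C) (hb : b ∈ C) : ({a, b} : Multiset α) ≤ C := by
  rw [Multiset.le_iff_count]
  intro z
  have hca : 1 ≤ C.count a := Multiset.one_le_count_iff_mem.mpr ha
  have hcb : 1 ≤ C.count b := Multiset.one_le_count_iff_mem.mpr hb
  show Multiset.count z (a ::ₘ {b}) ≤ _
  rw [Multiset.count_cons, Multiset.count_singleton]
  by_cases hza : z = a <;> by_cases hzb : z = b
  · exact absurd (hza ▸ hzb) hab
  · subst hza; simp [hzb]; omega
  · subst hzb; simp [hza]; omega
  · simp [hza, hzb]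

lemma filter_card_mono {α : Type*} [DecidableEq α] {s : Multiset α} {P R : α → Prop}
    [DecidablePred P] [DecidablePred R]
    (h : ∀ a ∈ s, P a → R a) : (s.filter P).card ≤ (s.filter R).card := by
  apply Multiset.card_le_card
  rw [Multiset.le_iff_count]
  intro z
  rw [Multiset.count_filter, Multiset.count_filter]
  by_cases hz : z ∈ s
  · by_cases hP : P z
    · rw [if_pos hP, if_pos (h z hz hP)]
    · rw [if_neg hP]; exact Nat.zero_le _
  · have h0 : s.count z = 0 := Multiset.count_eq_zero.mpr hz
    rw [h0]
    split_ifs <;> simp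

lemma filter_split {α : Type*} (s : Multiset α) (P R : α → Prop)
    [DecidablePred P] [DecidablePred R] :
    (s.filter P).card =
      (s.filter (fun a => P a ∧ R a)).card + (s.filter (fun a => P a ∧ ¬ R a)).card := by
  induction s using Multiset.induction with
  | empty => simp
  | cons a s ih =>
    simp only [Multiset.filter_cons, Multiset.card_add]
    by_cases hP : P a <;> by_cases hR : R a <;>
      simp [hP, hR] <;> omega

lemma card_filter_comp {α β : Type*} [Fintype β] [DecidableEq β]
    (C : Multiset α) (f : α → β) (P : β → Prop) [DecidablePred P] :
    (C.filter (fun a => P (f a))).card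
      = ∑ i ∈ Finset.univ.filter P, (C.filter (fun a => f a = i)).card := by
  induction C using Multiset.induction with
  | empty => simp
  | cons a s ih =>
    simp only [Multiset.filter_cons, Multiset.card_add, Finset.sum_add_distrib, ih]
    congr 1
    by_cases h : P (f a)
    · rw [if_pos h]
      rw [show (∑ i ∈ Finset.univ.filter P, (if f a = i then ({a} : Multiset α) else 0).card)
          = ∑ i ∈ Finset.univ.filter P, (if f a = i then 1 else 0) from
        Finset.sum_congr rfl (fun i _ => by split_ifs <;> simp)]
      rw [Finset.sum_ite_eq (Finset.univ.filter P) (f a) (fun _ => 1)]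
      simp [h]
    · rw [if_neg h]
      rw [show (∑ i ∈ Finset.univ.filter P, (if f a = i then ({a} : Multiset α) else 0).card)
          = ∑ i ∈ Finset.univ.filter P, (if f a = i then 1 else 0) from
        Finset.sum_congr rfl (fun i _ => by split_ifs <;> simp)]
      rw [Finset.sum_ite_eq (Finset.univ.filter P) (f a) (fun _ => 1)]
      simp [h]

lemma counting {k : ℕ} (x : Fin k → ℕ) (C : Multiset (Fin k × Fin k))
    (hinv : Invariant k x C) (Q : Fin k → Prop) [DecidablePred Q] :
    (C.filter (fun p => Q p.1 ∧ ¬ Q p.2)).card = (C.filter (fun p => Q p.2 ∧ ¬ Q p.1)).card := by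
  have h1 := filter_split C (fun p : Fin k × Fin k => Q p.1) (fun p => Q p.2)
  have h2 := filter_split C (fun p : Fin k × Fin k => Q p.2) (fun p => Q p.1)
  have e0 : (C.filter (fun p => Q p.1)).card = (C.filter (fun p => Q p.2)).card := by
    rw [card_filter_comp C Prod.fst Q, card_filter_comp C Prod.snd Q]
    exact Finset.sum_congr rfl fun i _ => ((hinv i).1).trans ((hinv i).2).symm
  have ecomm : (C.filter fun p => Q p.2 ∧ Q p.1).card = (C.filter fun p => Q p.1 ∧ Q p.2).card :=
    congrArg Multiset.card (Multiset.filter_congr fun p _ => and_comm)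
  omega

/-- If `μ` is the unique color in relative majority, then any stable
configuration satisfying the braket invariant contains the diagonal braket
`(μ,μ)` and no other diagonal braket. -/
theorem stmt6 (k : ℕ) (hk : 1 ≤ k) (x : Fin k → ℕ) (μ : Fin k)
    (hμ : 1 ≤ x μ) (hmaj : ∀ j : Fin k, j ≠ μ → x j < x μ)
    (C : Multiset (Fin k × Fin k))
    (hinv : Invariant k x C) (hstab : Stable k C) :
    (μ, μ) ∈ C ∧ ∀ j : Fin k, j ≠ μ → (j, j) ∉ C := by
  have hk0 : 0 < k := hk
  have hmem : (μ, μ) ∈ C := by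
    by_contra hdiag
    have hcard : (C.filter (fun p => p.2 = μ)).card = x μ := (hinv μ).2
    have hpos : 0 < (C.filter (fun p => p.2 = μ)).card := by rw [hcard]; omega
    obtain ⟨p0, hp0⟩ := Multiset.card_pos_iff_exists_mem.mp hpos
    obtain ⟨hp0C, hp0k⟩ := Multiset.mem_filter.mp hp0
    have hSne : (Finset.univ.filter (fun i : Fin k => (i, μ) ∈ C)).Nonempty := by
      refine ⟨p0.1, Finset.mem_filter.mpr ⟨Finset.mem_univ _, ?_⟩⟩
      have : (p0.1, p0.2) = p0 := rfl
      rw [← hp0k, this]; exact hp0C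
    obtain ⟨i0, hi0S, hminS⟩ :=
      Finset.exists_min_image (Finset.univ.filter (fun i : Fin k => (i, μ) ∈ C))
        (fun i => dd k μ i) hSne
    have hi0mem : (i0, μ) ∈ C := (Finset.mem_filter.mp hi0S).2
    have hmin : ∀ i : Fin k, (i, μ) ∈ C → dd k μ i0 ≤ dd k μ i := fun i hi =>
      hminS i (Finset.mem_filter.mpr ⟨Finset.mem_univ _, hi⟩)
    have hi0ne : i0 ≠ μ := fun h => hdiag (h ▸ hi0mem)
    have hb1 : 1 ≤ dd k μ i0 := dd_pos hk0 hi0ne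
    have hbk : dd k μ i0 < k := dd_lt hk0 μ i0
    -- Step A : every bra-μ braket has ket in S = {c | 1 ≤ dd c ≤ dd i0}
    have stepA : ∀ j : Fin k, (μ, j) ∈ C → 1 ≤ dd k μ j ∧ dd k μ j ≤ dd k μ i0 := by
      intro j hj
      have hjμ : j ≠ μ := fun h => hdiag (h ▸ hj)
      have h1 : 1 ≤ dd k μ j := dd_pos hk0 hjμ
      refine ⟨h1, ?_⟩
      by_contra hgt
      push_neg at hgt
      have hij0 : i0 ≠ j := fun h => by rw [h] at hgt; omega
      have hne : (μ, j) ≠ (i0, μ) := fun h => hjμ (congrArg Prod.snd h)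
      have hst := hstab μ j i0 μ (pair_le' hne hj hi0mem)
      rw [weight_eq hk0 μ (Ne.symm hjμ), weight_eq hk0 μ hi0ne, weight_diag,
        weight_eq hk0 μ hij0, dd_mu] at hst
      have hjlt := dd_lt hk0 μ j
      split_ifs at hst <;> omega
    -- Step B : any braket leaving S has bra i0
    have stepB : ∀ i j : Fin k, (i, j) ∈ C → 1 ≤ dd k μ i → dd k μ i ≤ dd k μ i0 →
        ¬(1 ≤ dd k μ j ∧ dd k μ j ≤ dd k μ i0) → i = i0 := by
      intro i j hijC h1 h2 h3
      have hjlt := dd_lt hk0 μ j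
      by_cases hj0 : dd k μ j = 0
      · have hjμ : j = μ := dd_inj hk0 (hj0.trans (dd_mu μ).symm)
        subst hjμ
        have := hmin i hijC
        exact dd_inj hk0 (le_antisymm h2 this)
      · have hjb : dd k μ i0 < dd k μ j := by omega
        by_cases hib : dd k μ i = dd k μ i0
        · exact dd_inj hk0 hib
        · have hilt : dd k μ i < dd k μ i0 := by omega
          have hiμ : i ≠ μ := fun h => by rw [h, dd_mu] at h1; omega
          have hijne : i ≠ j := fun h => by rw [h] at hilt; omega
          have hi0j : i0 ≠ j := fun h => by rw [h] at hjb; omega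
          have hne : (i, j) ≠ (i0, μ) := fun h => by
            have hjμ' : j = μ := congrArg Prod.snd h
            rw [hjμ', dd_mu] at hj0
            exact hj0 rfl
          have hst := hstab i j i0 μ (pair_le' hne hijC hi0mem)
          rw [weight_eq hk0 μ hijne, weight_eq hk0 μ hi0ne, weight_eq hk0 μ hiμ,
            weight_eq hk0 μ hi0j, dd_mu] at hst
          split_ifs at hst <;> omega
    -- Counting
    have hcount := counting x C hinv (fun c => 1 ≤ dd k μ c ∧ dd k μ c ≤ dd k μ i0)
    have hle1 : x μ ≤
        (C.filter (fun p => (1 ≤ dd k μ p.2 ∧ dd k μ p.2 ≤ dd k μ i0) ∧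
          ¬(1 ≤ dd k μ p.1 ∧ dd k μ p.1 ≤ dd k μ i0))).card := by
      rw [← (hinv μ).1]
      apply filter_card_mono
      intro p hp hpμ
      have hpC : (μ, p.2) ∈ C := by
        have : (p.1, p.2) = p := rfl
        rw [← hpμ, this]; exact hp
      refine ⟨stepA p.2 hpC, ?_⟩
      rw [hpμ, dd_mu]
      omega
    have hle2 :
        (C.filter (fun p => (1 ≤ dd k μ p.1 ∧ dd k μ p.1 ≤ dd k μ i0) ∧
          ¬(1 ≤ dd k μ p.2 ∧ dd k μ p.2 ≤ dd k μ i0))).card ≤ x i0 := by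
      rw [← (hinv i0).1]
      apply filter_card_mono
      intro p hp hcond
      have hpC : (p.1, p.2) ∈ C := by
        have : (p.1, p.2) = p := rfl
        rw [this]; exact hp
      exact stepB p.1 p.2 hpC hcond.1.1 hcond.1.2 hcond.2
    have hxlt : x i0 < x μ := hmaj i0 hi0ne
    omega
  refine ⟨hmem, ?_⟩
  intro c hc hcc
  have hne : (μ, μ) ≠ (c, c) := fun h => hc (congrArg Prod.fst h).symm
  have hst := hstab μ μ c c (pair_le' hne hmem hcc)
  have h1 : 1 ≤ dd k μ c := dd_pos hk0 hc
  have h2 : dd k μ c < k := dd_lt hk0 μ c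
  rw [weight_diag, weight_diag, weight_eq hk0 μ (Ne.symm hc), weight_eq hk0 μ hc, dd_mu] at hst
  split_ifs at hst <;> omega
end

section
/- Let k ≥ 1, n ≥ 1, and consider an n-agent Circles computation (c, sch, σ) whose schedule is weakly fair. Let x i = |{a ∈ Fin n : c a = i}| for each color i. Then there exists T ∈ ℕ such that σ t = σ T for all t ≥ T, and the multiset of states {σ T a : a ∈ Fin n} equals U(x) = Σ_{p=1}^{q} f(G_p), where q = max_i x i. -/
/-- One step of the Circles protocol: agents `a` and `b` exchange their kets iff
doing so strictly decreases the minimum weight of their two brakets; all other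
agents are unchanged. -/
def circlesStep (k n : ℕ) (st : Fin n → Fin k × Fin k) (a b : Fin n) :
    Fin n → Fin k × Fin k :=
  if min (weight k ((st a).1, (st b).2)) (weight k ((st b).1, (st a).2)) <
      min (weight k (st a)) (weight k (st b))
  then Function.update (Function.update st a ((st a).1, (st b).2)) b ((st b).1, (st a).2)
  else st

/-- The greedy independent set `G_p = {i : x i ≥ p}`. -/
def greedySet (k : ℕ) (x : Fin k → ℕ) (p : ℕ) : Finset (Fin k) :=
  Finset.univ.filter (fun i => p ≤ x i)

/-- The circle braket multiset of a finite set of colors `g_0 < g_1 < … < g_m`: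
`{(g_0,g_1), (g_1,g_2), …, (g_{m−1},g_m), (g_m,g_0)}`. -/
def circleBrakets (k : ℕ) (S : Finset (Fin k)) : Multiset (Fin k × Fin k) :=
  ↑((S.sort (· ≤ ·)).zip ((S.sort (· ≤ ·)).rotate 1))

/-- `U(x) = Σ_{p=1}^{q} f(G_p)`, with `q = max_i x i`. -/
def U (k : ℕ) (x : Fin k → ℕ) : Multiset (Fin k × Fin k) :=
  ∑ p ∈ Finset.Icc 1 (Finset.univ.sup x), circleBrakets k (greedySet k x p)

section arith
variable {k : ℕ}

lemma weight_def (a b : Fin k) : weight k (a, b) =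
    if a.val = b.val then k else if a.val < b.val then b.val - a.val else b.val + k - a.val := by
  have ha := a.isLt; have hb := b.isLt
  unfold weight
  simp only [Fin.ext_iff]
  split_ifs with h1 h2
  · rfl
  · have : b.val + k - a.val = (b.val - a.val) + k := by omega
    rw [this, Nat.add_mod_right, Nat.mod_eq_of_lt (by omega)]
  · rw [Nat.mod_eq_of_lt (by omega)]

lemma weight_pos (a b : Fin k) : 1 ≤ weight k (a, b) := by
  have ha := a.isLt; have hb := b.isLt
  rw [weight_def]; split_ifs <;> omega

lemma weight_le (a b : Fin k) : weight k (a, b) ≤ k := by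
  have ha := a.isLt; have hb := b.isLt
  rw [weight_def]; split_ifs <;> omega

lemma weight_endpoint (a b : Fin k) : (a.val + weight k (a, b)) % k = b.val := by
  have ha := a.isLt; have hb := b.isLt
  rw [weight_def]; split_ifs with h1 h2
  · rw [Nat.add_mod_right, Nat.mod_eq_of_lt ha]; omega
  · rw [show a.val + (b.val - a.val) = b.val from by omega, Nat.mod_eq_of_lt hb]
  · rw [show a.val + (b.val + k - a.val) = b.val + k from by omega, Nat.add_mod_right,
      Nat.mod_eq_of_lt hb]

lemma weight_unique (a b : Fin k) (m : ℕ) (h1 : 1 ≤ m) (h2 : m ≤ k)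
    (h : (a.val + m) % k = b.val) : weight k (a, b) = m := by
  have he := weight_endpoint a b
  have hmod : m % k = weight k (a, b) % k := by
    have : (a.val + m) % k = (a.val + weight k (a, b)) % k := by rw [h, he]
    have := (Nat.ModEq.add_left_cancel' a.val (this : _ ≡ _ [MOD k]))
    exact this
  have hw1 := weight_pos a b
  have hw2 := weight_le a b
  rcases Nat.eq_or_lt_of_le h2 with h2e | h2l
  · subst h2e
    rcases Nat.eq_or_lt_of_le hw2 with hwe | hwl
    · omega
    · rw [Nat.mod_self, Nat.mod_eq_of_lt hwl] at hmod; omega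
  · rw [Nat.mod_eq_of_lt h2l] at hmod
    rcases Nat.eq_or_lt_of_le hw2 with hwe | hwl
    · rw [hwe, Nat.mod_self] at hmod; omega
    · rw [Nat.mod_eq_of_lt hwl] at hmod; omega

lemma weight_end_inj (a b c : Fin k) (h : weight k (a, b) = weight k (a, c)) : b = c := by
  have hb := weight_endpoint a b
  have hc := weight_endpoint a c
  rw [h] at hb
  exact Fin.ext (hb ▸ hc ▸ rfl)

lemma weight_symm_add (a b : Fin k) (h : a ≠ b) :
    weight k (a, b) + weight k (b, a) = k := by
  have ha := a.isLt; have hb := b.isLt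
  have : a.val ≠ b.val := fun hv => h (Fin.ext hv)
  rw [weight_def, weight_def]; split_ifs <;> omega

lemma weight_add (a b c : Fin k) (h : weight k (a, b) + weight k (b, c) ≤ k) :
    weight k (a, c) = weight k (a, b) + weight k (b, c) := by
  have h1 := weight_pos a b
  have h2 := weight_pos b c
  apply weight_unique _ _ _ (by omega) h
  have e1 := weight_endpoint a b
  have e2 := weight_endpoint b c
  calc (a.val + (weight k (a, b) + weight k (b, c))) % k
      = ((a.val + weight k (a, b)) % k + weight k (b, c)) % k := by
        rw [Nat.mod_add_mod]; ring_nf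
    _ = c.val := by rw [e1, e2]

lemma weight_cross (i j i' j' : Fin k) :
    (weight k (i, j') + weight k (i', j)) % k = (weight k (i, j) + weight k (i', j')) % k := by
  have e1 := weight_endpoint i j'
  have e2 := weight_endpoint i' j
  have e3 := weight_endpoint i j
  have e4 := weight_endpoint i' j'
  have h : (i.val + weight k (i, j') + (i'.val + weight k (i', j))) % k
      = (i.val + weight k (i, j) + (i'.val + weight k (i', j'))) % k := by
    rw [Nat.add_mod (i.val + weight k (i,j')), e1, e2,
      Nat.add_mod (i.val + weight k (i,j)), e3, e4]
    ring_nf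
  have := Nat.ModEq.add_left_cancel' (i.val + i'.val)
    (show _ ≡ _ [MOD k] from by
      unfold Nat.ModEq
      calc (i.val + i'.val + (weight k (i, j') + weight k (i', j))) % k
          = (i.val + weight k (i, j') + (i'.val + weight k (i', j))) % k := by ring_nf
        _ = (i.val + weight k (i, j) + (i'.val + weight k (i', j'))) % k := h
        _ = (i.val + i'.val + (weight k (i, j) + weight k (i', j'))) % k := by ring_nf)
  exact this

end arith

lemma min_pair_lt {a' b' c' d' : ℕ} (h : min a' b' < min c' d') :
    (a' < c' ∧ a' < d') ∨ (b' < c' ∧ b' < d') := by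
  simp only [lt_min_iff, min_lt_iff] at h
  omega

lemma swap_decrease {k a' b' c' d' : ℕ}
    (ha1 : 1 ≤ a') (ha2 : a' ≤ k) (hb1 : 1 ≤ b') (hb2 : b' ≤ k)
    (hc1 : 1 ≤ c') (hc2 : c' ≤ k) (hd1 : 1 ≤ d') (hd2 : d' ≤ k)
    (hmod : (a' + b') % k = (c' + d') % k)
    (hlt : min a' b' < min c' d') :
    (a' + b' + k = c' + d') ∨ (a' + b' = c' + d' ∧ c' * c' + d' * d' < a' * a' + b' * b') := by
  have hm := min_pair_lt hlt
  have hcases : a' + b' = c' + d' ∨ a' + b' + k = c' + d' ∨ c' + d' + k = a' + b' := by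
    rcases le_total (a' + b') (c' + d') with hle | hle
    · have hdvd : k ∣ (c' + d') - (a' + b') :=
        (Nat.modEq_iff_dvd' hle).mp (hmod : Nat.ModEq k _ _)
      obtain ⟨e, he⟩ := hdvd
      have : e ≤ 1 := by
        by_contra hgt
        have : 2 * k ≤ k * e := by
          calc 2 * k = k * 2 := by ring
          _ ≤ k * e := Nat.mul_le_mul_left k (by omega)
        omega
      interval_cases e <;> omega
    · have hdvd : k ∣ (a' + b') - (c' + d') :=
        (Nat.modEq_iff_dvd' hle).mp ((hmod : Nat.ModEq k _ _).symm)
      obtain ⟨e, he⟩ := hdvd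
      have : e ≤ 1 := by
        by_contra hgt
        have : 2 * k ≤ k * e := by
          calc 2 * k = k * 2 := by ring
          _ ≤ k * e := Nat.mul_le_mul_left k (by omega)
        omega
      interval_cases e <;> omega
  rcases hcases with he | he | he
  · right
    refine ⟨he, ?_⟩
    rcases hm with ⟨h1, h2⟩ | ⟨h1, h2⟩
    · zify at *
      nlinarith [mul_pos (by linarith : (0:ℤ) < (c':ℤ) - a') (by linarith : (0:ℤ) < (d':ℤ) - a')]
    · zify at *
      nlinarith [mul_pos (by linarith : (0:ℤ) < (c':ℤ) - b') (by linarith : (0:ℤ) < (d':ℤ) - b')]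
  · left; exact he
  · omega

section term
variable {k n : ℕ}

def msum (st : Fin n → Fin k × Fin k) : ℕ := ∑ a, weight k (st a)
def msq (st : Fin n → Fin k × Fin k) : ℕ := ∑ a, weight k (st a) * weight k (st a)
def meas (st : Fin n → Fin k × Fin k) : ℕ :=
  msum st * (n * (k * k) + 1) + (n * (k * k) - msq st)

lemma msq_le (st : Fin n → Fin k × Fin k) : msq st ≤ n * (k * k) := by
  have h : ∀ a ∈ Finset.univ, weight k (st a) * weight k (st a) ≤ k * k :=
    fun a _ => Nat.mul_le_mul (weight_le _ _) (weight_le _ _)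
  calc msq st ≤ Finset.univ.card • (k * k) := Finset.sum_le_card_nsmul _ _ _ h
    _ = n * (k * k) := by simp [Finset.card_univ, smul_eq_mul]

lemma sum_two_update (f : Fin n → ℕ) (a b : Fin n) (hab : a ≠ b) (va vb : ℕ) :
    ∑ x, Function.update (Function.update f a va) b vb x
      = vb + (va + ∑ x ∈ (Finset.univ \ {b}) \ {a}, f x) := by
  rw [Finset.sum_update_of_mem (Finset.mem_univ b)]
  congr 1
  rw [Finset.sum_update_of_mem (by simp [hab] : a ∈ Finset.univ \ {b})]

lemma sum_two_split (f : Fin n → ℕ) (a b : Fin n) (hab : a ≠ b) :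
    ∑ x, f x = f b + (f a + ∑ x ∈ (Finset.univ \ {b}) \ {a}, f x) := by
  have h1 := sum_two_update f a b hab (f a) (f b)
  rw [← h1]
  apply Finset.sum_congr rfl
  intro x _
  rcases eq_or_ne x b with rfl | hxb
  · simp
  · rcases eq_or_ne x a with rfl | hxa
    · rw [Function.update_of_ne hxb, Function.update_self]
    · rw [Function.update_of_ne hxb, Function.update_of_ne hxa]

lemma step_meas (st : Fin n → Fin k × Fin k) (a b : Fin n) (hab : a ≠ b) :
    circlesStep k n st a b = st ∨ meas (circlesStep k n st a b) < meas st := by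
  unfold circlesStep
  split_ifs with h
  swap
  · exact Or.inl rfl
  right
  set A := st a with hA
  set B := st b with hB
  set st' := Function.update (Function.update st a (A.1, B.2)) b (B.1, A.2) with hst'
  have hwcomp : ∀ (g : Fin k × Fin k → ℕ),
      (fun x => g (st' x)) = Function.update (Function.update (fun x => g (st x)) a (g (A.1, B.2))) b (g (B.1, A.2)) := by
    intro g
    funext x
    rcases eq_or_ne x b with rfl | hxb
    · simp [hst']
    · rcases eq_or_ne x a with rfl | hxa
      · simp [hst', Function.update_of_ne hxb, hab]
      · simp [hst', Function.update_of_ne hxb, Function.update_of_ne hxa]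
  have hsum' : msum st' = weight k (B.1, A.2) + (weight k (A.1, B.2) +
      ∑ x ∈ (Finset.univ \ {b}) \ {a}, weight k (st x)) := by
    unfold msum
    rw [show (fun x => weight k (st' x)) = _ from hwcomp (weight k)]
    exact sum_two_update _ a b hab _ _
  have hsum : msum st = weight k B + (weight k A +
      ∑ x ∈ (Finset.univ \ {b}) \ {a}, weight k (st x)) := sum_two_split _ a b hab
  have hsq' : msq st' = weight k (B.1, A.2) * weight k (B.1, A.2) +
      (weight k (A.1, B.2) * weight k (A.1, B.2) +
      ∑ x ∈ (Finset.univ \ {b}) \ {a}, weight k (st x) * weight k (st x)) := by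
    unfold msq
    rw [show (fun x => weight k (st' x) * weight k (st' x)) = _ from
      hwcomp (fun p => weight k p * weight k p)]
    exact sum_two_update _ a b hab _ _
  have hsq : msq st = weight k B * weight k B + (weight k A * weight k A +
      ∑ x ∈ (Finset.univ \ {b}) \ {a}, weight k (st x) * weight k (st x)) :=
    sum_two_split _ a b hab
  have hdec := swap_decrease (weight_pos A.1 B.2) (weight_le A.1 B.2)
    (weight_pos B.1 A.2) (weight_le B.1 A.2)
    (weight_pos A.1 A.2) (weight_le A.1 A.2)
    (weight_pos B.1 B.2) (weight_le B.1 B.2)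
    (weight_cross A.1 A.2 B.1 B.2) (by exact h)
  simp only [Prod.mk.eta] at hdec
  have hK1 := msq_le st
  have hK2 := msq_le st'
  unfold meas
  rcases hdec with hcase | ⟨he, hsq_lt⟩
  · have hm1 : msum st' + 1 ≤ msum st := by
      have hk1 : 1 ≤ k := le_trans (weight_pos A.1 A.2) (weight_le A.1 A.2)
      omega
    have hexp : msum st' * (n * (k * k) + 1) + (n * (k * k) + 1)
        ≤ msum st * (n * (k * k) + 1) := by
      calc msum st' * (n * (k * k) + 1) + (n * (k * k) + 1)
          = (msum st' + 1) * (n * (k * k) + 1) := by ring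
        _ ≤ _ := Nat.mul_le_mul_right _ hm1
    omega
  · have hms : msum st' = msum st := by omega
    have hlt2 : msq st < msq st' := by omega
    rw [hms]
    omega

end term

section comb
variable {k : ℕ}

lemma pair_le_of_mem {α : Type*} [DecidableEq α] {A B : α} {M : Multiset α}
    (hA : A ∈ M) (hB : B ∈ M) (hne : A ≠ B) : A ::ₘ {B} ≤ M := by
  rw [Multiset.le_iff_count]
  intro z
  rcases eq_or_ne z A with rfl | hzA
  · have : Multiset.count z (z ::ₘ {B}) = 1 := by
      simp [Multiset.count_cons, Multiset.count_singleton, hne.symm, Ne.symm hne, hne]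
    rw [this]
    exact Multiset.one_le_count_iff_mem.mpr hA
  · rcases eq_or_ne z B with rfl | hzB
    · have : Multiset.count z (A ::ₘ {z}) = 1 := by
        simp [Multiset.count_cons, Multiset.count_singleton, hzA]
      rw [this]
      exact Multiset.one_le_count_iff_mem.mpr hB
    · have : Multiset.count z (A ::ₘ {B}) = 0 := by
        simp [Multiset.count_cons, Multiset.count_singleton, hzA, hzB]
      omega

/-- Elements of the zip of the sorted list with its rotation: both coordinates
are in `S` and the second is a weight-minimizer from the first. -/
lemma zip_mem_spec (S : Finset (Fin k)) {z : Fin k × Fin k}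
    (hz : z ∈ (S.sort (· ≤ ·)).zip ((S.sort (· ≤ ·)).rotate 1)) :
    z.1 ∈ S ∧ z.2 ∈ S ∧ ∀ p ∈ S, weight k (z.1, z.2) ≤ weight k (z.1, p) := by
  set l := S.sort (· ≤ ·) with hl
  have hsorted : l.Pairwise (· < ·) := (Finset.sortedLT_sort S).pairwise
  obtain ⟨m, hm, hzm⟩ := List.mem_iff_getElem.mp hz
  have hmlen : m < l.length := by
    rw [List.length_zip, List.length_rotate] at hm
    omega
  have hmod : (m + 1) % l.length < l.length := Nat.mod_lt _ (by omega)
  have hz1 : z.1 = l[m]'hmlen := by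
    rw [← hzm, List.getElem_zip]
  have hz2 : z.2 = l[(m + 1) % l.length]'hmod := by
    rw [← hzm, List.getElem_zip]
    simp [List.getElem_rotate]
  have hmono : ∀ (i j : ℕ) (hi : i < l.length) (hj : j < l.length), i ≤ j →
      ((l[i]'hi : Fin k)).val ≤ ((l[j]'hj : Fin k)).val := by
    intro i j hi hj hij
    rcases Nat.eq_or_lt_of_le hij with rfl | hlt
    · exact le_refl _
    · have h := hsorted.rel_get_of_lt (a := ⟨i, hi⟩) (b := ⟨j, hj⟩) hlt
      simp only [List.get_eq_getElem] at h
      exact le_of_lt h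
  have hstr : ∀ (i j : ℕ) (hi : i < l.length) (hj : j < l.length), i < j →
      ((l[i]'hi : Fin k)).val < ((l[j]'hj : Fin k)).val := by
    intro i j hi hj hlt
    have h := hsorted.rel_get_of_lt (a := ⟨i, hi⟩) (b := ⟨j, hj⟩) hlt
    simp only [List.get_eq_getElem] at h
    exact h
  have hmem : ∀ (i : ℕ) (hi : i < l.length), l[i]'hi ∈ S := by
    intro i hi
    rw [← Finset.mem_sort (α := Fin k) (· ≤ ·)]
    exact List.getElem_mem _
  refine ⟨hz1 ▸ hmem m hmlen, hz2 ▸ hmem _ hmod, ?_⟩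
  intro p hp
  obtain ⟨j, hj, hpj⟩ := List.mem_iff_getElem.mp ((Finset.mem_sort (α := Fin k) (· ≤ ·)).mpr hp)
  simp only [← hl] at hj hpj
  rcases Nat.lt_or_ge (m + 1) l.length with hcase | hcase
  · have h1 : (m + 1) % l.length = m + 1 := Nat.mod_eq_of_lt hcase
    have hgg' : ((l[m]'hmlen : Fin k)).val < ((l[(m+1)%l.length]'hmod : Fin k)).val := by
      apply hstr
      omega
    rw [hz1, hz2, weight_def, weight_def]
    have hisLt := (l[m]'hmlen : Fin k).isLt
    have hisLt2 := (l[(m+1)%l.length]'hmod : Fin k).isLt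
    have hisLtp := p.isLt
    rcases (show j ≤ m ∨ m + 1 ≤ j from by omega) with hjm | hjm
    · have hple : p.val ≤ ((l[m]'hmlen : Fin k)).val := hpj ▸ hmono j m hj hmlen hjm
      split_ifs <;> omega
    · have hgep : ((l[(m+1)%l.length]'hmod : Fin k)).val ≤ p.val := by
        have := hmono ((m+1)%l.length) j (by omega) hj (by omega)
        exact hpj ▸ this
      split_ifs <;> omega
  · have hmlast : m + 1 = l.length := by omega
    have h1 : (m + 1) % l.length = 0 := by rw [hmlast, Nat.mod_self]
    have h0len : 0 < l.length := by omega
    rw [hz1, hz2, weight_def, weight_def]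
    have hisLt := (l[m]'hmlen : Fin k).isLt
    have hisLt0 := (l[(m+1)%l.length]'hmod : Fin k).isLt
    have hisLtp := p.isLt
    have hple : p.val ≤ ((l[m]'hmlen : Fin k)).val := hpj ▸ hmono j m hj hmlen (by omega)
    have h0le : ((l[(m+1)%l.length]'hmod : Fin k)).val ≤ p.val := by
      have := hmono ((m+1)%l.length) j (by omega) hj (by omega)
      exact hpj ▸ this
    rcases Nat.eq_or_lt_of_le (Nat.zero_le m) with hm0 | hm0
    · have hidx : (m+1)%l.length = m := by omega
      have heqm : ((l[(m+1)%l.length]'hmod : Fin k)).val = ((l[m]'hmlen : Fin k)).val := by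
        simp only [hidx]
      split_ifs <;> omega
    · have hlt0m : ((l[(m+1)%l.length]'hmod : Fin k)).val < ((l[m]'hmlen : Fin k)).val := by
        apply hstr
        omega
      split_ifs <;> omega

end comb

section main
variable {k : ℕ}

lemma stable_eq_U (q : ℕ) : ∀ (x : Fin k → ℕ) (M : Multiset (Fin k × Fin k)),
    Finset.univ.sup x = q →
    (∀ i, (M.map Prod.fst).count i = x i) →
    (∀ i, (M.map Prod.snd).count i = x i) →
    (∀ A B : Fin k × Fin k, A ::ₘ {B} ≤ M →
      min (weight k A) (weight k B) ≤ min (weight k (A.1, B.2)) (weight k (B.1, A.2))) →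
    M = U k x := by
  induction q with
  | zero =>
    intro x M hsup hfst hsnd hstab
    have hx : ∀ i, x i = 0 := fun i =>
      Nat.le_antisymm (hsup ▸ Finset.le_sup (Finset.mem_univ i)) (Nat.zero_le _)
    have hM : M = 0 := by
      rw [Multiset.eq_zero_iff_forall_notMem]
      intro A hA
      have h1 : A.1 ∈ M.map Prod.fst := Multiset.mem_map_of_mem _ hA
      have h2 := Multiset.count_pos.mpr h1
      rw [hfst] at h2
      have := hx A.1
      omega
    rw [hM]
    unfold U
    rw [hsup]
    simp
  | succ q IH =>
    intro x M hsup hfst hsnd hstab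
    set S := greedySet k x 1 with hS
    have hmemS : ∀ i : Fin k, i ∈ S ↔ 1 ≤ x i := by
      intro i; simp [hS, greedySet]
    have hfstS : ∀ A ∈ M, A.1 ∈ S := by
      intro A hA
      rw [hmemS, ← hfst]
      exact Multiset.count_pos.mpr (Multiset.mem_map_of_mem _ hA)
    have hsndS : ∀ A ∈ M, A.2 ∈ S := by
      intro A hA
      rw [hmemS, ← hsnd]
      exact Multiset.count_pos.mpr (Multiset.mem_map_of_mem _ hA)
    have claimB : ∀ g g', g ∈ S → g' ∈ S →
        (∀ p ∈ S, weight k (g, g') ≤ weight k (g, p)) → (g, g') ∈ M := by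
      intro g g' hg hg' hmin
      have hc : g' ∈ M.map Prod.snd := by
        rw [← Multiset.count_pos] at *
        rw [hsnd]
        exact (hmemS g').mp hg'
      obtain ⟨C, hCM, hC2⟩ := Multiset.mem_map.mp hc
      obtain ⟨s, c2⟩ := C
      simp only at hC2
      rw [hC2] at hCM
      clear hC2
      by_cases hC1 : s = g
      · rw [hC1] at hCM; exact hCM
      · have ha : g ∈ M.map Prod.fst := by
          rw [← Multiset.count_pos, hfst]
          exact (hmemS g).mp hg
        obtain ⟨A, hAM, hA1⟩ := Multiset.mem_map.mp ha
        obtain ⟨a1, a2⟩ := A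
        simp only at hA1
        rw [hA1] at hAM
        clear hA1
        by_cases hA2 : a2 = g'
        · rw [hA2] at hAM; exact hAM
        · exfalso
          have hsS : s ∈ S := hfstS _ hCM
          have hA2S : a2 ∈ S := hsndS _ hAM
          have h1 : weight k (s, g) + weight k (g, s) = k := weight_symm_add _ _ hC1
          have h2 : weight k (g, g') ≤ weight k (g, s) := hmin s hsS
          have h3 : weight k (s, g') = weight k (s, g) + weight k (g, g') :=
            weight_add _ _ _ (by omega)
          have h4 : weight k (g, g') ≤ weight k (g, a2) := hmin a2 hA2S
          have h5 : weight k (g, a2) ≠ weight k (g, g') := fun h => hA2 (weight_end_inj _ _ _ h)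
          have h6 : 1 ≤ weight k (s, g) := weight_pos _ _
          have hAC : (g, a2) ≠ (s, g') := by
            intro h
            injection h with hh1 hh2
            exact hC1 hh1.symm
          have hpair := hstab (g, a2) (s, g') (pair_le_of_mem hAM hCM hAC)
          simp only at hpair
          omega
    have hFle : circleBrakets k S ≤ M := by
      unfold circleBrakets
      have hnodup : ((S.sort (· ≤ ·)).zip ((S.sort (· ≤ ·)).rotate 1)).Nodup := by
        apply List.Nodup.of_map Prod.fst
        rw [List.map_fst_zip (by rw [List.length_rotate])]
        exact Finset.sort_nodup _ _
      rw [Multiset.le_iff_count]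
      intro z
      by_cases hz : z ∈ (S.sort (· ≤ ·)).zip ((S.sort (· ≤ ·)).rotate 1)
      · rw [Multiset.count_eq_one_of_mem (Multiset.coe_nodup.mpr hnodup) (by exact_mod_cast hz)]
        apply Multiset.one_le_count_iff_mem.mpr
        obtain ⟨h1, h2, h3⟩ := zip_mem_spec S hz
        have := claimB z.1 z.2 h1 h2 h3
        simpa using this
      · rw [Multiset.count_eq_zero_of_notMem (by exact_mod_cast hz)]
        exact Nat.zero_le _
    set F := circleBrakets k S with hF
    have hMF : M - F + F = M := tsub_add_cancel_of_le hFle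
    set x' : Fin k → ℕ := fun i => x i - (if i ∈ S then 1 else 0) with hx'
    have hcountS : ∀ i : Fin k, S.val.count i = if i ∈ S then 1 else 0 := by
      intro i
      split_ifs with h
      · exact Multiset.count_eq_one_of_mem S.nodup (Finset.mem_val.mpr h)
      · exact Multiset.count_eq_zero_of_notMem (fun hc => h (Finset.mem_val.mp hc))
    have hFfst : F.map Prod.fst = S.val := by
      show (circleBrakets k S).map Prod.fst = S.val
      unfold circleBrakets
      rw [Multiset.map_coe]
      rw [List.map_fst_zip (by rw [List.length_rotate])]
      exact Finset.sort_eq _ _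
    have hFsnd : F.map Prod.snd = S.val := by
      show (circleBrakets k S).map Prod.snd = S.val
      unfold circleBrakets
      rw [Multiset.map_coe]
      rw [List.map_snd_zip (by rw [List.length_rotate])]
      rw [show ((↑((S.sort (· ≤ ·)).rotate 1) : Multiset (Fin k))) = (↑(S.sort (· ≤ ·)) : Multiset (Fin k)) from
        Multiset.coe_eq_coe.mpr (List.rotate_perm _ _)]
      exact Finset.sort_eq _ _
    have hfst' : ∀ i, ((M - F).map Prod.fst).count i = x' i := by
      intro i
      have hadd : (M - F).map Prod.fst + F.map Prod.fst = M.map Prod.fst := by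
        rw [← Multiset.map_add, hMF]
      have hc := congrArg (Multiset.count i) hadd
      rw [Multiset.count_add, hfst, hFfst, hcountS] at hc
      simp only [hx']
      omega
    have hsnd' : ∀ i, ((M - F).map Prod.snd).count i = x' i := by
      intro i
      have hadd : (M - F).map Prod.snd + F.map Prod.snd = M.map Prod.snd := by
        rw [← Multiset.map_add, hMF]
      have hc := congrArg (Multiset.count i) hadd
      rw [Multiset.count_add, hsnd, hFsnd, hcountS] at hc
      simp only [hx']
      omega
    have hstab' : ∀ A B : Fin k × Fin k, A ::ₘ {B} ≤ M - F →
        min (weight k A) (weight k B) ≤ min (weight k (A.1, B.2)) (weight k (B.1, A.2)) :=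
      fun A B h => hstab A B (le_trans h (Multiset.sub_le_self _ _))
    have huniv : (Finset.univ : Finset (Fin k)).Nonempty := by
      by_contra h
      rw [Finset.not_nonempty_iff_eq_empty] at h
      rw [h, Finset.sup_empty] at hsup
      exact Nat.succ_ne_zero q (by simpa using hsup.symm)
    obtain ⟨i0, _, hi0⟩ := Finset.exists_mem_eq_sup Finset.univ huniv x
    have hxi0 : x i0 = q + 1 := by rw [← hi0, hsup]
    have hsup' : Finset.univ.sup x' = q := by
      apply le_antisymm
      · apply Finset.sup_le
        intro i _
        have hle : x i ≤ q + 1 := hsup ▸ Finset.le_sup (Finset.mem_univ i)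
        simp only [hx']
        split_ifs with hiS
        · omega
        · have hx0 : x i = 0 := by
            by_contra hne
            exact hiS ((hmemS i).mpr (by omega))
          omega
      · have hi0S : i0 ∈ S := (hmemS i0).mpr (by omega)
        have : x' i0 = q := by simp only [hx']; rw [if_pos hi0S]; omega
        exact this ▸ Finset.le_sup (Finset.mem_univ i0)
    have hIH := IH x' (M - F) hsup' hfst' hsnd' hstab'
    have hUrec : U k x = F + U k x' := by
      unfold U
      rw [hsup, hsup']
      have hIcc : Finset.Icc 1 (q + 1) = insert 1 (Finset.Icc 2 (q + 1)) := by
        ext p; simp [Finset.mem_Icc, Finset.mem_insert]; omega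
      rw [hIcc, Finset.sum_insert (by simp [Finset.mem_Icc])]
      have hG1 : greedySet k x 1 = S := rfl
      rw [hG1]
      congr 1
      rw [show Finset.Icc 2 (q + 1) = Finset.map (addRightEmbedding 1) (Finset.Icc 1 q) from by
        rw [Finset.map_add_right_Icc]]
      rw [Finset.sum_map]
      apply Finset.sum_congr rfl
      intro p hp
      have hp1 : 1 ≤ p := (Finset.mem_Icc.mp hp).1
      congr 1
      ext i
      simp only [greedySet, Finset.mem_filter, Finset.mem_univ, true_and, addRightEmbedding,
        Function.Embedding.coeFn_mk, hx']
      by_cases hiS : i ∈ S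
      · have hx1 : 1 ≤ x i := (hmemS i).mp hiS
        rw [if_pos hiS]
        refine (Finset.mem_filter_univ i).trans ?_
        omega
      · have hx0 : x i = 0 := by
          by_contra hne
          exact hiS ((hmemS i).mpr (by omega))
        rw [if_neg hiS]
        refine (Finset.mem_filter_univ i).trans ?_
        omega
    rw [hUrec, ← hIH, add_comm]
    exact hMF.symm

end main

lemma exists_pair_agents {n : ℕ} {β : Type*} [DecidableEq β] (f : Fin n → β) {A B : β}
    (h : A ::ₘ {B} ≤ Finset.univ.val.map f) : ∃ a b : Fin n, a ≠ b ∧ f a = A ∧ f b = B := by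
  have hA : A ∈ Finset.univ.val.map f := Multiset.mem_of_le h (Multiset.mem_cons_self _ _)
  obtain ⟨a, ha, hfa⟩ := Multiset.mem_map.mp hA
  have hcons : (Finset.univ.val : Multiset (Fin n)) = a ::ₘ Finset.univ.val.erase a :=
    (Multiset.cons_erase ha).symm
  rw [hcons, Multiset.map_cons, hfa] at h
  have h3 : ({B} : Multiset β) ≤ (Finset.univ.val.erase a).map f :=
    (Multiset.cons_le_cons_iff A).mp h
  have hB : B ∈ (Finset.univ.val.erase a).map f :=
    Multiset.mem_of_le h3 (Multiset.mem_singleton_self _)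
  obtain ⟨b, hb, hfb⟩ := Multiset.mem_map.mp hB
  have hne : b ≠ a := ((Finset.univ.nodup.mem_erase_iff).mp hb).1
  exact ⟨a, b, fun hh => hne hh.symm, hfa, hfb⟩

/-- Under a weakly fair schedule, a Circles computation stabilizes, and the
multiset of stabilized states equals `U(x)` where `x i` is the number of agents
with input color `i`. -/
theorem stmt7 (k n : ℕ) (hk : 1 ≤ k) (hn : 1 ≤ n)
    (c : Fin n → Fin k) (sch : ℕ → Fin n × Fin n)
    (hsch : ∀ t, (sch t).1 ≠ (sch t).2)
    (hfair : ∀ p : Fin n × Fin n, p.1 ≠ p.2 → ∀ t₀ : ℕ, ∃ t, t₀ ≤ t ∧ sch t = p)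
    (σ : ℕ → Fin n → Fin k × Fin k)
    (hinit : ∀ a, σ 0 a = (c a, c a))
    (hstep : ∀ t, σ (t + 1) = circlesStep k n (σ t) (sch t).1 (sch t).2) :
    ∃ T : ℕ, (∀ t ≥ T, σ t = σ T) ∧
      Finset.univ.val.map (σ T) =
        U k (fun i => (Finset.univ.filter (fun a => c a = i)).card) := by
  -- termination
  set μ : ℕ → ℕ := fun t => meas (σ t) with hμ
  have hstep2 : ∀ t, σ (t + 1) = σ t ∨ μ (t + 1) < μ t := by
    intro t
    rcases step_meas (σ t) (sch t).1 (sch t).2 (hsch t) with h | h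
    · left; rw [hstep t, h]
    · right
      have h2 : μ (t + 1) = meas (circlesStep k n (σ t) (sch t).1 (sch t).2) := by
        simp only [hμ]; rw [hstep t]
      rw [h2]
      exact h
  have hanti : Antitone μ := antitone_nat_of_succ_le (fun t => by
    rcases hstep2 t with h | h
    · simp only [hμ]; rw [h]
    · exact le_of_lt h)
  obtain ⟨T, hT⟩ := Nat.sInf_mem (Set.range_nonempty μ)
  have hconstμ : ∀ t, T ≤ t → μ t = μ T := by
    intro t ht
    apply le_antisymm (hT ▸ hanti ht)
    rw [hT]
    exact Nat.sInf_le ⟨t, rfl⟩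
  have hσconst : ∀ t, T ≤ t → σ t = σ T := by
    intro t ht
    induction t, ht using Nat.le_induction with
    | base => rfl
    | succ t ht ih =>
      rcases hstep2 t with h | h
      · rw [h, ih]
      · exfalso
        have h1 := hconstμ t ht
        have h2 := hconstμ (t + 1) (by omega)
        omega
  refine ⟨T, fun t ht => hσconst t ht, ?_⟩
  -- stability of the configuration at time T
  have hstable : ∀ a b : Fin n, a ≠ b →
      ¬ (min (weight k ((σ T a).1, (σ T b).2)) (weight k ((σ T b).1, (σ T a).2)) <
        min (weight k (σ T a)) (weight k (σ T b))) := by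
    intro a b hab hcond
    obtain ⟨t, ht, hscht⟩ := hfair (a, b) hab T
    have h3 : σ (t + 1) = circlesStep k n (σ t) a b := by rw [hstep t, hscht]
    rw [hσconst t ht, hσconst (t + 1) (by omega)] at h3
    unfold circlesStep at h3
    rw [if_pos hcond] at h3
    have hb4 : σ T b = ((σ T b).1, (σ T a).2) := by
      conv_lhs => rw [h3]
      rw [Function.update_self]
    have hbb : (σ T b).2 = (σ T a).2 := by
      conv_lhs => rw [hb4]
    have heq1 : ((σ T a).1, (σ T b).2) = σ T a := by rw [hbb]

    have heq2 : ((σ T b).1, (σ T a).2) = σ T b := hb4.symm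
    rw [heq1, heq2] at hcond
    exact lt_irrefl _ hcond
  -- conservation of bras
  have hfstpt : ∀ t a, (σ t a).1 = c a := by
    intro t
    induction t with
    | zero => intro a; rw [hinit]
    | succ t ih =>
      intro a
      rw [hstep]
      unfold circlesStep
      split_ifs with h
      · by_cases hb : a = (sch t).2
        · subst hb
          rw [Function.update_self]
          exact ih _
        · rw [Function.update_of_ne hb]
          by_cases ha : a = (sch t).1
          · subst ha
            rw [Function.update_self]
            exact ih _
          · rw [Function.update_of_ne ha]
            exact ih a
      · exact ih a
  -- conservation of the multiset of kets
  have hsndM : ∀ t, (Finset.univ.val.map (σ t)).map Prod.snd = Finset.univ.val.map c := by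
    intro t
    induction t with
    | zero =>
      rw [Multiset.map_map]
      apply Multiset.map_congr rfl
      intro a _
      rw [Function.comp_apply, hinit]
    | succ t ih =>
      rw [hstep]
      unfold circlesStep
      split_ifs with h
      · have hab : (sch t).1 ≠ (sch t).2 := hsch t
        have hswap : (Prod.snd ∘ (Function.update (Function.update (σ t) (sch t).1
            ((σ t (sch t).1).1, (σ t (sch t).2).2)) (sch t).2
            ((σ t (sch t).2).1, (σ t (sch t).1).2)))
            = (fun x => (σ t ((Equiv.swap (sch t).1 (sch t).2) x)).2) := by
          funext y
          rw [Function.comp_apply]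
          by_cases hxb : y = (sch t).2
          · subst hxb
            rw [Function.update_self, Equiv.swap_apply_right]
          · rw [Function.update_of_ne hxb]
            by_cases hxa : y = (sch t).1
            · subst hxa
              rw [Function.update_self, Equiv.swap_apply_left]
            · rw [Function.update_of_ne hxa, Equiv.swap_apply_of_ne_of_ne hxa hxb]
        rw [Multiset.map_map, hswap]
        have hval : Finset.univ.val.map (⇑(Equiv.swap (sch t).1 (sch t).2)) = Finset.univ.val := by
          rw [show (⇑(Equiv.swap (sch t).1 (sch t).2))
            = ⇑(Equiv.swap (sch t).1 (sch t).2).toEmbedding from rfl]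
          rw [← Finset.map_val, Finset.map_univ_equiv]
        calc Finset.univ.val.map (fun x => (σ t ((Equiv.swap (sch t).1 (sch t).2) x)).2)
            = (Finset.univ.val.map (⇑(Equiv.swap (sch t).1 (sch t).2))).map
              (fun x => (σ t x).2) := by rw [Multiset.map_map]; rfl
          _ = Finset.univ.val.map (fun x => (σ t x).2) := by rw [hval]
          _ = Finset.univ.val.map c := by
              rw [← ih, Multiset.map_map]
              rfl
      · exact ih
  -- counts
  set x : Fin k → ℕ := fun i => (Finset.univ.filter (fun a => c a = i)).card with hxdef
  set M := Finset.univ.val.map (σ T) with hMdef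
  have hcount : ∀ i : Fin k, (Finset.univ.val.map c).count i = x i := by
    intro i
    rw [Multiset.count_map]
    have h1 : Multiset.filter (fun a => i = c a) Finset.univ.val
        = Multiset.filter (fun a => c a = i) Finset.univ.val :=
      Multiset.filter_congr (fun a _ => ⟨Eq.symm, Eq.symm⟩)
    rw [h1]
    simp only [hxdef]
    rw [Finset.card_def, Finset.filter_val]
  have hfstc : ∀ i, (M.map Prod.fst).count i = x i := by
    intro i
    have hMf : M.map Prod.fst = Finset.univ.val.map c := by
      simp only [hMdef]
      rw [Multiset.map_map]
      apply Multiset.map_congr rfl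
      intro a _
      exact hfstpt T a
    rw [hMf]
    exact hcount i
  have hsndc : ∀ i, (M.map Prod.snd).count i = x i := by
    intro i
    rw [show M.map Prod.snd = Finset.univ.val.map c from hsndM T]
    exact hcount i
  have hstabM : ∀ A B : Fin k × Fin k, A ::ₘ {B} ≤ M →
      min (weight k A) (weight k B) ≤ min (weight k (A.1, B.2)) (weight k (B.1, A.2)) := by
    intro A B hAB
    obtain ⟨a, b, hab, hfa, hfb⟩ := exists_pair_agents (σ T) hAB
    have hns := hstable a b hab
    rw [hfa, hfb] at hns
    exact not_lt.mp hns
  exact stable_eq_U (Finset.univ.sup x) x M rfl hfstc hsndc hstabM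
end
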